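/- Let I(r) = √3·∫_r¹ dξ/√(1-ξ³). Then the equation 2·I'(r)/I(r) = -1/r has exactly one solution r ∈ (0,1). -/

import Mathlib

/-!
Writing `f ξ = 1 / √(1 - ξ³)`, we have `I' = -√3 f` and `I > 0` on `[0, 1)`, so the equation is
`∫_r^1 f = 2 r f(r)`. The left side is strictly decreasing and the right side strictly increasing
(`f` is positive and increasing), so their difference has at most one zero. It is positive at
`r = 0`, and negative at `r = 3/4` because `f ξ ≤ (1 - ξ)^(-1/2)` gives `∫_r^1 f ≤ 2 √(1 - r)`
while `f ≥ 1`; the intermediate value theorem gives the zero.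
-/

open intervalIntegral

noncomputable def Ifun : ℝ → ℝ :=
  fun r => Real.sqrt 3 * ∫ ξ in r..1, 1 / Real.sqrt (1 - ξ^3)

open MeasureTheory Set

namespace Ifun

noncomputable def integrand (ξ : ℝ) : ℝ := 1 / Real.sqrt (1 - ξ ^ 3)

lemma eq_mul_integral (r : ℝ) : Ifun r = Real.sqrt 3 * ∫ ξ in r..1, integrand ξ := rfl

lemma one_sub_cube_pos {ξ : ℝ} (hξ : ξ < 1) : 0 < 1 - ξ ^ 3 := by
  nlinarith [sq_nonneg ξ, sq_nonneg (1 + ξ)]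

lemma integrand_nonneg (ξ : ℝ) : 0 ≤ integrand ξ := by
  unfold integrand
  positivity

lemma integrand_pos {ξ : ℝ} (hξ : ξ < 1) : 0 < integrand ξ := by
  have := one_sub_cube_pos hξ
  unfold integrand
  positivity

lemma one_le_integrand {ξ : ℝ} (h0 : 0 ≤ ξ) (h1 : ξ < 1) : 1 ≤ integrand ξ := by
  have hsqrt : Real.sqrt (1 - ξ ^ 3) ≤ 1 :=
    Real.sqrt_le_one.2 (by linarith [pow_nonneg h0 3])
  rw [integrand, le_div_iff₀ (Real.sqrt_pos.2 (one_sub_cube_pos h1))]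
  linarith

lemma strictMonoOn_integrand : StrictMonoOn integrand (Iio 1) := by
  intro r hr s hs hrs
  have hcube : r ^ 3 < s ^ 3 := Odd.strictMono_pow (by decide) hrs
  exact one_div_lt_one_div_of_lt (Real.sqrt_pos.2 (one_sub_cube_pos hs))
    (Real.sqrt_lt_sqrt (one_sub_cube_pos hs).le (by linarith))

lemma measurable_integrand : Measurable integrand :=
  measurable_const.div (by fun_prop)

lemma continuousAt_integrand {r : ℝ} (hr : r < 1) : ContinuousAt integrand r :=
  continuousAt_const.div (by fun_prop) (Real.sqrt_pos.2 (one_sub_cube_pos hr)).ne'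

-- Since `1 - ξ³ = (1 - ξ)(1 + ξ + ξ²) ≥ 1 - ξ` on `[0, 1]`.
lemma integrand_le_rpow {ξ : ℝ} (h0 : 0 ≤ ξ) (h1 : ξ ≤ 1) :
    integrand ξ ≤ (1 - ξ) ^ (-(1 / 2) : ℝ) := by
  rw [Real.rpow_neg (by linarith), ← Real.sqrt_eq_rpow, ← one_div, integrand]
  rcases h1.eq_or_lt with rfl | hlt
  · norm_num
  · have hcube : ξ ^ 3 ≤ ξ := by nlinarith [mul_nonneg h0 h0]
    exact one_div_le_one_div_of_le (Real.sqrt_pos.2 (by linarith))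
      (Real.sqrt_le_sqrt (by linarith))

lemma intervalIntegrable_rpow_one_sub (a b : ℝ) :
    IntervalIntegrable (fun ξ : ℝ => (1 - ξ) ^ (-(1 / 2) : ℝ)) volume a b := by
  simpa only [sub_sub_cancel] using
    (intervalIntegrable_rpow' (a := 1 - a) (b := 1 - b)
      (by norm_num : (-1 : ℝ) < -(1 / 2))).comp_sub_left 1

lemma integral_rpow_one_sub (r : ℝ) :
    ∫ ξ in r..1, (1 - ξ) ^ (-(1 / 2) : ℝ) = 2 * Real.sqrt (1 - r) := by
  rw [integral_comp_sub_left (fun y : ℝ => y ^ (-(1 / 2) : ℝ)), sub_self,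
    integral_rpow (Or.inl (by norm_num)), Real.sqrt_eq_rpow,
    Real.zero_rpow (by norm_num)]
  norm_num
  ring

lemma intervalIntegrable_integrand {a b : ℝ} (ha : a ∈ Icc (0 : ℝ) 1) (hb : b ∈ Icc (0 : ℝ) 1) :
    IntervalIntegrable integrand volume a b := by
  refine (intervalIntegrable_rpow_one_sub a b).mono_fun ?_ ?_
  · exact measurable_integrand.aestronglyMeasurable
  · have hsub : uIoc a b ⊆ Icc 0 1 := uIoc_subset_uIcc.trans (uIcc_subset_Icc ha hb)
    filter_upwards [ae_restrict_mem measurableSet_uIoc] with ξ hξ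
    obtain ⟨h0, h1⟩ := hsub hξ
    rw [Real.norm_of_nonneg (integrand_nonneg ξ), Real.norm_of_nonneg (by positivity)]
    exact integrand_le_rpow h0 h1

lemma hasDerivAt_integral_integrand {r : ℝ} (h0 : 0 ≤ r) (h1 : r < 1) :
    HasDerivAt (fun u => ∫ ξ in u..1, integrand ξ) (-integrand r) r :=
  integral_hasDerivAt_left (intervalIntegrable_integrand ⟨h0, h1.le⟩ ⟨zero_le_one, le_rfl⟩)
    measurable_integrand.stronglyMeasurable.stronglyMeasurableAtFilter
    (continuousAt_integrand h1)

lemma integral_integrand_pos {r : ℝ} (h0 : 0 ≤ r) (h1 : r < 1) :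
    0 < ∫ ξ in r..1, integrand ξ :=
  intervalIntegral_pos_of_pos_on (intervalIntegrable_integrand ⟨h0, h1.le⟩ ⟨zero_le_one, le_rfl⟩)
    (fun _ hξ => integrand_pos hξ.2) h1

lemma strictAntiOn_integral_integrand :
    StrictAntiOn (fun u => ∫ ξ in u..1, integrand ξ) (Icc 0 1) := by
  intro r hr s hs hrs
  have hsplit := integral_add_adjacent_intervals (intervalIntegrable_integrand hr hs)
    (intervalIntegrable_integrand hs ⟨zero_le_one, le_rfl⟩)
  have hpos := intervalIntegral_pos_of_pos_on (intervalIntegrable_integrand hr hs)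
    (fun _ hξ => integrand_pos (hξ.2.trans_le hs.2)) hrs
  dsimp only
  linarith

lemma pos {r : ℝ} (h0 : 0 ≤ r) (h1 : r < 1) : 0 < Ifun r :=
  mul_pos (by positivity) (integral_integrand_pos h0 h1)

lemma hasDerivAt {r : ℝ} (h0 : 0 ≤ r) (h1 : r < 1) :
    HasDerivAt Ifun (-(Real.sqrt 3 * integrand r)) r := by
  have h := (hasDerivAt_integral_integrand h0 h1).const_mul (Real.sqrt 3)
  rw [mul_neg] at h
  exact h

noncomputable def gap (r : ℝ) : ℝ := (∫ ξ in r..1, integrand ξ) - 2 * r * integrand r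

lemma strictAntiOn_gap : StrictAntiOn gap (Ico 0 1) := by
  intro r hr s hs hrs
  have hint := strictAntiOn_integral_integrand (Ico_subset_Icc_self hr) (Ico_subset_Icc_self hs) hrs
  have hmul : r * integrand r < s * integrand s :=
    mul_lt_mul'' hrs (strictMonoOn_integrand hr.2 hs.2 hrs) hr.1 (integrand_nonneg r)
  dsimp only at hint
  unfold gap
  linarith

lemma continuousAt_gap {r : ℝ} (h0 : 0 ≤ r) (h1 : r < 1) : ContinuousAt gap r :=
  (hasDerivAt_integral_integrand h0 h1).continuousAt.sub
    ((continuousAt_const.mul continuousAt_id).mul (continuousAt_integrand h1))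

lemma gap_zero_pos : 0 < gap 0 := by
  simpa [gap] using integral_integrand_pos le_rfl zero_lt_one

lemma gap_three_quarters_neg : gap (3 / 4) < 0 := by
  have hint : ∫ ξ in (3 / 4 : ℝ)..1, integrand ξ ≤ 2 * Real.sqrt (1 - 3 / 4) := by
    rw [← integral_rpow_one_sub]
    refine integral_mono_on (by norm_num)
      (intervalIntegrable_integrand ⟨by norm_num, by norm_num⟩ ⟨zero_le_one, le_rfl⟩)
      (intervalIntegrable_rpow_one_sub _ _) fun ξ hξ => ?_
    exact integrand_le_rpow (by linarith [hξ.1]) hξ.2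
  have hsqrt : Real.sqrt (1 - 3 / 4) = 1 / 2 := by
    rw [Real.sqrt_eq_iff_mul_self_eq_of_pos (by norm_num)]
    norm_num
  have hone : 1 ≤ integrand (3 / 4) := one_le_integrand (by norm_num) (by norm_num)
  unfold gap
  linarith

lemma two_mul_deriv_div_eq_neg_inv_iff {r : ℝ} (hr : r ∈ Ioo (0 : ℝ) 1) :
    2 * deriv Ifun r / Ifun r = -1 / r ↔ gap r = 0 := by
  rw [(hasDerivAt hr.1.le hr.2).deriv, div_eq_div_iff (pos hr.1.le hr.2).ne' hr.1.ne',
    eq_mul_integral, gap]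
  have h3 : Real.sqrt 3 ≠ 0 := by positivity
  constructor <;> intro h
  · apply mul_left_cancel₀ h3
    linear_combination h
  · linear_combination Real.sqrt 3 * h

end Ifun

theorem stmt_16 :
    ∃! r : ℝ, r ∈ Set.Ioo (0:ℝ) 1 ∧ 2 * deriv Ifun r / Ifun r = -1/r := by
  have hcont : ContinuousOn Ifun.gap (Icc 0 (3 / 4)) := fun r hr =>
    (Ifun.continuousAt_gap hr.1 (by linarith [hr.2])).continuousWithinAt
  obtain ⟨c, hc, hgap⟩ := intermediate_value_Icc' (by norm_num) hcont
    ⟨Ifun.gap_three_quarters_neg.le, Ifun.gap_zero_pos.le⟩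
  have hc0 : c ≠ 0 := by
    rintro rfl
    exact Ifun.gap_zero_pos.ne' hgap
  have hcI : c ∈ Ioo (0 : ℝ) 1 := ⟨lt_of_le_of_ne hc.1 hc0.symm, by linarith [hc.2]⟩
  refine ⟨c, ⟨hcI, (Ifun.two_mul_deriv_div_eq_neg_inv_iff hcI).2 hgap⟩, ?_⟩
  rintro r ⟨hrI, hr⟩
  exact Ifun.strictAntiOn_gap.injOn (Ioo_subset_Ico_self hrI) (Ioo_subset_Ico_self hcI)
    (((Ifun.two_mul_deriv_div_eq_neg_inv_iff hrI).1 hr).trans hgap.symm)
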